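/- arXiv:1505.01503 — 4 statements merged into one kernel-verified Lean document; each statement's English description precedes it below -/
import Mathlib

section
/- Let E ⊂ ℝ^{n+1} be an n-dimensional ADR set. Then there is a constant c > 0, depending only on n and the ADR constant, such that for every x ∈ E and every 0 < r < diam E there exists a point X ∈ ℝ^{n+1} with B(X, cr) ⊆ B(x, r) ∖ E; that is, the open set ℝ^{n+1} ∖ E contains a corkscrew ball relative to every surface ball of E. -/
open Metric MeasureTheory Set
open scoped NNReal ENNReal

noncomputable section

/-- `ℝ^{n+1}` -/
abbrev Euc (n : ℕ) : Type := EuclideanSpace ℝ (Fin (n + 1))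

/-- The distance between two subsets of `ℝ^{n+1}`. -/
def sDist {n : ℕ} (A B : Set (Euc n)) : ℝ := sInf (Set.image2 dist A B)

/-- `E ⊆ ℝ^{n+1}` is an `n`-dimensional Ahlfors-David regular set with constant `C`. -/
def IsADR (n : ℕ) (E : Set (Euc n)) (C : ℝ) : Prop :=
  IsClosed E ∧ 1 ≤ C ∧ ∀ x ∈ E, ∀ r : ℝ, 0 < r → ENNReal.ofReal r < EMetric.diam E →
    ENNReal.ofReal (C⁻¹ * r ^ n) ≤ μH[(n : ℝ)] (E ∩ ball x r) ∧
      μH[(n : ℝ)] (E ∩ ball x r) ≤ ENNReal.ofReal (C * r ^ n)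

/-- **Existence of corkscrew points for ADR sets.** If `E ⊆ ℝ^{n+1}` is
`n`-dimensional ADR, there is `c > 0`, depending only on `n` and the ADR constant,
such that for every `x ∈ E` and `0 < r < diam E` there is `X` with
`B(X, cr) ⊆ B(x, r) ∖ E`. -/
theorem ADR_corkscrew (n : ℕ) (hn : 1 ≤ n) (C₀ : ℝ) :
    ∃ c : ℝ, 0 < c ∧
      ∀ E : Set (Euc n), IsADR n E C₀ →
        ∀ x ∈ E, ∀ r : ℝ, 0 < r → ENNReal.ofReal r < EMetric.diam E →
          ∃ X : Euc n, ball X (c * r) ⊆ ball x r \ E := by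
  set C : ℝ := max C₀ 1 with hCdef
  have hC1 : (1:ℝ) ≤ C := le_max_right _ _
  have hCpos : (0:ℝ) < C := one_pos.trans_le hC1
  have h12 : (0:ℝ) < 12 ^ (n+1) := by positivity
  have h12' : (12:ℝ) ≤ 12 ^ (n+1) := by
    calc (12:ℝ) = 12 ^ 1 := (pow_one _).symm
    _ ≤ 12 ^ (n+1) := pow_le_pow_right₀ (by norm_num) (by omega)
  set c : ℝ := (2 * 12 ^ (n+1) * C^2)⁻¹ with hcdef
  have hcpos : 0 < c := by positivity
  have hcval : 12 ^ (n+1) * C^2 * c = 1/2 := by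
    rw [hcdef]
    have : (2 * 12 ^ (n+1) * C^2) ≠ 0 := by positivity
    field_simp
  have hc4 : c ≤ 1/4 := by
    rw [hcdef]
    have h4 : (4:ℝ) ≤ 2 * 12 ^ (n+1) * C^2 := by nlinarith
    calc (2 * 12 ^ (n+1) * C^2)⁻¹ ≤ (4:ℝ)⁻¹ := by
          apply inv_anti₀ (by norm_num) h4
    _ = 1/4 := by norm_num
  refine ⟨c, hcpos, ?_⟩
  rintro E ⟨hEc, hC₀1, hADR⟩ x hx r hr hrd
  have hCC : C = C₀ := max_eq_left hC₀1
  by_contra hcon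
  push_neg at hcon
  set ρ : ℝ := c * r with hρdef
  have hρpos : 0 < ρ := mul_pos hcpos hr
  have hρ4 : ρ ≤ r/4 := by rw [hρdef]; nlinarith
  set A : Set (Euc n) := E ∩ closedBall x (r/2) with hAdef
  set F : Set (Set (Euc n)) := {s | s ⊆ A ∧ s.Pairwise fun a b => 2*ρ ≤ dist a b} with hFdef
  obtain ⟨S, hSF, hSmax⟩ : ∃ S, Maximal (· ∈ F) S := by
    apply zorn_subset
    intro ch hch hchain
    refine ⟨⋃₀ ch, ⟨?_, ?_⟩, fun s hs => subset_sUnion_of_mem hs⟩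
    · exact sUnion_subset fun s hs => (hch hs).1
    · intro a ha b hb hab
      obtain ⟨s, hs, has⟩ := ha
      obtain ⟨t, ht, hbt⟩ := hb
      rcases hchain.total hs ht with hst | hts
      · exact (hch ht).2 (hst has) hbt hab
      · exact (hch hs).2 has (hts hbt) hab
  have hSA : S ⊆ A := hSF.1
  have hSsep : S.Pairwise fun a b => 2*ρ ≤ dist a b := hSF.2
  -- covering claim
  have hcover : closedBall x (r/4) ⊆ ⋃ z ∈ S, ball z (3*ρ) := by
    intro y hy
    have hy' : dist y x ≤ r/4 := mem_closedBall.mp hy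
    have hball : ball y ρ ⊆ ball x r := ball_subset_ball' (by linarith)
    have hne : (ball y ρ ∩ E).Nonempty := by
      by_contra hem
      rw [Set.not_nonempty_iff_eq_empty] at hem
      exact hcon y (fun p hp => ⟨hball hp, fun hpE =>
        (Set.eq_empty_iff_forall_notMem.mp hem p) ⟨hp, hpE⟩⟩)
    obtain ⟨w, hwball, hwE⟩ := hne
    have hwy : dist w y < ρ := mem_ball.mp hwball
    have hwA : w ∈ A := ⟨hwE, mem_closedBall.mpr (by
      calc dist w x ≤ dist w y + dist y x := dist_triangle _ _ _
        _ ≤ r/2 := by linarith)⟩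
    have : ∃ z ∈ S, dist w z < 2*ρ := by
      by_contra hsep
      push_neg at hsep
      have hins : insert w S ∈ F := by
        constructor
        · exact insert_subset hwA hSA
        · rw [Set.pairwise_insert]
          exact ⟨hSsep, fun z hz hne => ⟨hsep z hz, by rw [dist_comm]; exact hsep z hz⟩⟩
      have : insert w S ⊆ S := hSmax hins (subset_insert _ _)
      have hwS : w ∈ S := this (mem_insert _ _)
      have := hsep w hwS
      simp [dist_self] at this
      linarith
    obtain ⟨z, hzS, hwz⟩ := this
    refine Set.mem_biUnion hzS (mem_ball.mpr ?_)
    calc dist y z ≤ dist y w + dist w z := dist_triangle _ _ _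
      _ < 3*ρ := by rw [dist_comm] at hwy; linarith
  -- finite subcover
  obtain ⟨T₀, hT₀⟩ := (isCompact_closedBall x (r/4)).elim_finite_subcover
    (fun z : S => ball (z : Euc n) (3*ρ)) (fun z => isOpen_ball)
    (by
      intro y hy
      obtain ⟨z, hzS, hz⟩ := Set.mem_iUnion₂.mp (hcover hy)
      exact Set.mem_iUnion.mpr ⟨⟨z, hzS⟩, hz⟩)
  classical
  set T : Finset (Euc n) := T₀.image Subtype.val with hTdef
  have hTS : ∀ z ∈ T, z ∈ S := by
    intro z hz
    obtain ⟨w, _, rfl⟩ := Finset.mem_image.mp hz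
    exact w.2
  have hcoverT : closedBall x (r/4) ⊆ ⋃ z ∈ T, ball z (3*ρ) := by
    intro y hy
    obtain ⟨i, hi⟩ := Set.mem_iUnion.mp (hT₀ hy)
    obtain ⟨hiT₀, hyi⟩ := Set.mem_iUnion.mp hi
    exact Set.mem_biUnion (Finset.mem_image_of_mem Subtype.val hiT₀) hyi
  set N : ℕ := T.card with hNdef
  -- volume estimate
  set V : ℝ≥0∞ := volume (ball (0 : Euc n) 1) with hVdef
  have hV0 : V ≠ 0 := (measure_ball_pos _ _ one_pos).ne'
  have hVt : V ≠ ⊤ := measure_ball_lt_top.ne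
  have hfin : Module.finrank ℝ (Euc n) = n + 1 := finrank_euclideanSpace_fin
  have hvol : ENNReal.ofReal ((r/4)^(n+1)) * V ≤ (N : ℝ≥0∞) * ENNReal.ofReal ((3*ρ)^(n+1)) * V := by
    have h1 : volume (ball x (r/4)) ≤ ∑ z ∈ T, volume (ball z (3*ρ)) :=
      le_trans (measure_mono (ball_subset_closedBall.trans hcoverT))
        (measure_biUnion_finset_le _ _)
    rw [Measure.addHaar_ball _ x (by linarith : (0:ℝ) ≤ r/4), hfin] at h1
    have h2 : ∀ z ∈ T, volume (ball z (3*ρ)) = ENNReal.ofReal ((3*ρ)^(n+1)) * V := by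
      intro z _
      rw [Measure.addHaar_ball _ z (by linarith : (0:ℝ) ≤ 3*ρ), hfin]
    rw [Finset.sum_congr rfl h2, Finset.sum_const, nsmul_eq_mul, ← mul_assoc] at h1
    exact h1
  have hreal1 : (r/4)^(n+1) ≤ (N : ℝ) * (3*ρ)^(n+1) := by
    have := (ENNReal.mul_le_mul_iff_left hV0 hVt).mp hvol
    rw [← ENNReal.ofReal_natCast N, ← ENNReal.ofReal_mul (by positivity)] at this
    exact (ENNReal.ofReal_le_ofReal_iff (by positivity)).mp this
  -- Hausdorff measure estimate
  have hzball : ∀ z ∈ T, ball z ρ ⊆ ball x r := by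
    intro z hz
    have : dist z x ≤ r/2 := mem_closedBall.mp (hSA (hTS z hz)).2
    exact ball_subset_ball' (by linarith)
  have hdisj : (↑T : Set (Euc n)).PairwiseDisjoint (fun z => E ∩ ball z ρ) := by
    intro a ha b hb hab
    have h2 : 2*ρ ≤ dist a b := hSsep (hTS a ha) (hTS b hb) hab
    exact Disjoint.mono inter_subset_right inter_subset_right
      (ball_disjoint_ball (by linarith))
  have hupper : μH[(n : ℝ)] (E ∩ ball x r) ≤ ENNReal.ofReal (C * r^n) := by
    rw [hCC]; exact (hADR x hx r hr hrd).2
  have hsum : ∑ z ∈ T, μH[(n : ℝ)] (E ∩ ball z ρ) ≤ ENNReal.ofReal (C * r^n) := by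
    rw [← measure_biUnion_finset hdisj
      (fun z _ => hEc.measurableSet.inter measurableSet_ball)]
    refine le_trans (measure_mono ?_) hupper
    refine Set.iUnion₂_subset fun z hz => ?_
    exact Set.inter_subset_inter_right E (hzball z hz)
  have hlow : (N : ℝ≥0∞) * ENNReal.ofReal (C⁻¹ * ρ^n) ≤
      ∑ z ∈ T, μH[(n : ℝ)] (E ∩ ball z ρ) := by
    rw [← nsmul_eq_mul]
    refine Finset.card_nsmul_le_sum T _ _ fun z hz => ?_
    have hzE : z ∈ E := (hSA (hTS z hz)).1
    have hρd : ENNReal.ofReal ρ < EMetric.diam E :=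
      lt_of_le_of_lt (ENNReal.ofReal_le_ofReal (by linarith)) hrd
    have := (hADR z hzE ρ hρpos hρd).1
    rwa [← hCC] at this
  have hreal2 : (N : ℝ) * (C⁻¹ * ρ^n) ≤ C * r^n := by
    have h := le_trans hlow hsum
    rw [← ENNReal.ofReal_natCast N, ← ENNReal.ofReal_mul (by positivity)] at h
    exact (ENNReal.ofReal_le_ofReal_iff (by positivity)).mp h
  -- final contradiction
  have hrn : (0:ℝ) < r^n := pow_pos hr n
  have hN2 : (N : ℝ) * c^n ≤ C^2 := by
    have h : ((N : ℝ) * C⁻¹ * c^n) * r^n ≤ C * r^n := by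
      rw [show ((N:ℝ) * C⁻¹ * c^n) * r^n = (N:ℝ) * (C⁻¹ * (c^n * r^n)) from by ring]
      rw [show c^n * r^n = ρ^n from by rw [hρdef, mul_pow]]
      exact hreal2
    have h1 : (N : ℝ) * C⁻¹ * c^n ≤ C := le_of_mul_le_mul_right h hrn
    have h2 := mul_le_mul_of_nonneg_right h1 hCpos.le
    have heq : (N:ℝ) * C⁻¹ * c^n * C = (N:ℝ) * c^n := by
      field_simp
    rw [heq] at h2
    rw [pow_two]
    exact h2
  have hN1 : 1 ≤ (N : ℝ) * (12*c)^(n+1) := by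
    have hq : (0:ℝ) < (r/4)^(n+1) := by positivity
    have h : (3*ρ)^(n+1) = (12*c)^(n+1) * (r/4)^(n+1) := by
      rw [← mul_pow, show (3:ℝ)*ρ = 12*c*(r/4) from by rw [hρdef]; ring]
    rw [h, ← mul_assoc] at hreal1
    exact le_of_mul_le_mul_right (by linarith [hreal1]) hq
  have hfinal : (1:ℝ) ≤ C^2 * (12^(n+1) * c) := by
    have h : (12*c)^(n+1) = c^n * (12^(n+1) * c) := by
      rw [mul_pow, pow_succ]; ring
    rw [h, ← mul_assoc] at hN1
    calc (1:ℝ) ≤ (N:ℝ) * c^n * (12^(n+1) * c) := hN1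
      _ ≤ C^2 * (12^(n+1) * c) := by
          apply mul_le_mul_of_nonneg_right hN2 (by positivity)
  rw [show C^2 * (12^(n+1)*c) = 12^(n+1) * C^2 * c by ring, hcval] at hfinal
  linarith
end
end

section
/- Let n ≥ 1 and C₀ ≥ 1, and let E ⊂ ℝ^{n+1} be an n-dimensional ADR set with constant C₀. There is κ₀ = κ₀(n, C₀) such that the following holds for every κ ≥ κ₀. Let {Q_j}_{j ≥ 1} be pairwise disjoint subsets of E with associated lengths ℓ_j > 0 satisfying diam Q_j ≤ C₀ ℓ_j and H^n(Q_j) ≥ C₀^{-1} ℓ_j^n, and suppose dist(Q_i, Q_j) ≥ κ max{ℓ_i, ℓ_j} for all i ≠ j. Let S₀ ⊂ ℝ^{n+1} be either empty or an n-dimensional ADR set with constant C₀, and for each j ≥ 1 let S_j ⊂ ℝ^{n+1} be an n-dimensional ADR set with constant C₀ such that S_j ⊆ {Y ∈ ℝ^{n+1} : dist(Y, Q_j) ≤ C₀ ℓ_j}. Then the set S := S₀ ∪ ⋃_{j ≥ 1} S_j satisfies the upper ADR bound H^n(S ∩ B(x,r)) ≤ C r^n for every x ∈ ℝ^{n+1}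 and every r > 0, where C depends only on n, C₀ and κ. -/
/-!
An ADR set with constant `C₀` satisfies the upper bound `H^n(F ∩ B(x, r)) ≲ rⁿ` at every scale,
not only below its diameter, because a ball of radius `r` is covered by boundedly many balls of
radius `r / 4`. This handles `S₀`, and also the pieces `S_j` with `ℓ_j > r` that meet `B(x, r)`:
by the separation of the `Q_j` there is at most one of them.

A piece with `ℓ_j ≤ r` is covered by balls of radius `≈ C₀ ℓ_j` centred at a maximal separated
subset of `S_j ∩ B(x, r)`. Each centre lies within `2 C₀ ℓ_j` of some `q ∈ Q_j ⊆ E`, so by the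
lower ADR bound of `E` each covering ball has mass `≲ H^n(E ∩ B(q, ℓ_j))`. The balls `B(q, ℓ_j)`
are pairwise disjoint, also across different pieces (separation again), and lie in
`B(x, 4 C₀ r)`, so the small pieces contribute `≲ H^n(E ∩ B(x, 4 C₀ r)) ≲ rⁿ`.
-/

open Metric MeasureTheory Set
open scoped NNReal ENNReal

noncomputable section

theorem Set.Subsingleton.hausdorffMeasure_le_ofReal_pow {X : Type*} [EMetricSpace X]
    [MeasurableSpace X] [BorelSpace X] {s : Set X} (hs : s.Subsingleton) (n : ℕ) (r : ℝ) :
    μH[(n : ℝ)] s ≤ ENNReal.ofReal (r ^ n) := by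
  rcases Nat.eq_zero_or_pos n with rfl | hn
  · rcases hs.eq_empty_or_singleton with rfl | ⟨x, rfl⟩
    · simp
    · simp [Measure.hausdorffMeasure_zero_singleton]
  · have := Measure.nullSingletonClass_hausdorff X (d := n) (by exact_mod_cast hn)
    simp [hs.measure_zero]

theorem exists_finset_forall_closedBall_subset_biUnion_ball (V : Type*) [NormedAddCommGroup V]
    [NormedSpace ℝ V] [ProperSpace V] :
    ∃ T : Finset V, ∀ (x : V) (d : ℝ), 0 < d →
      closedBall x d ⊆ ⋃ t ∈ T, ball (x + d • t) (d / 4) := by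
  obtain ⟨T, hT⟩ := (isCompact_closedBall (0 : V) 1).elim_finite_subcover
    (fun z => ball z (1 / 4)) (fun _ => isOpen_ball)
    (fun y _ => mem_iUnion.2 ⟨y, mem_ball_self (by norm_num)⟩)
  refine ⟨T, fun x d hd y hy => ?_⟩
  have hy' : d⁻¹ • (y - x) ∈ closedBall (0 : V) 1 := by
    rw [mem_closedBall, dist_eq_norm] at hy
    rwa [mem_closedBall_zero_iff, norm_smul, norm_inv, Real.norm_of_nonneg hd.le,
      inv_mul_le_one₀ hd]
  obtain ⟨t, htT, ht⟩ := mem_iUnion₂.1 (hT hy')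
  refine mem_iUnion₂.2 ⟨t, htT, ?_⟩
  have hscale : y - (x + d • t) = d • (d⁻¹ • (y - x) - t) := by
    rw [smul_sub, smul_inv_smul₀ hd.ne']
    abel
  rw [mem_ball, dist_eq_norm] at ht ⊢
  rw [hscale, norm_smul, Real.norm_of_nonneg hd.le]
  linarith [mul_lt_mul_of_pos_left ht hd]

theorem measure_inter_closedBall_le_card_mul {V : Type*} [NormedAddCommGroup V]
    [NormedSpace ℝ V] [MeasurableSpace V] (μ : Measure V) {T : Finset V}
    (hT : ∀ (x : V) (d : ℝ), 0 < d → closedBall x d ⊆ ⋃ t ∈ T, ball (x + d • t) (d / 4))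
    {F : Set V} {c : V} {d : ℝ} {M : ℝ≥0∞} (hd : 0 < d)
    (hM : ∀ w ∈ F, μ (F ∩ ball w (d / 2)) ≤ M) :
    μ (F ∩ closedBall c d) ≤ T.card * M := by
  have hcover : F ∩ closedBall c d ⊆ ⋃ t ∈ T, F ∩ ball (c + d • t) (d / 4) := by
    intro y ⟨hyF, hy⟩
    obtain ⟨t, htT, ht⟩ := mem_iUnion₂.1 (hT c d hd hy)
    exact mem_iUnion₂.2 ⟨t, htT, hyF, ht⟩
  have hpiece : ∀ p : V, μ (F ∩ ball p (d / 4)) ≤ M := by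
    intro p
    rcases (F ∩ ball p (d / 4)).eq_empty_or_nonempty with he | ⟨w, hwF, hwp⟩
    · simp [he]
    · refine (measure_mono (inter_subset_inter_right _ (ball_subset_ball' ?_))).trans (hM w hwF)
      rw [mem_ball'] at hwp
      linarith
  calc μ (F ∩ closedBall c d) ≤ ∑ t ∈ T, μ (F ∩ ball (c + d • t) (d / 4)) :=
        (measure_mono hcover).trans (measure_biUnion_finset_le T _)
    _ ≤ ∑ _t ∈ T, M := Finset.sum_le_sum fun t _ => hpiece _
    _ = T.card * M := by rw [Finset.sum_const, nsmul_eq_mul]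

theorem IsADR.hausdorffMeasure_inter_ball_le {n : ℕ} {F : Set (Euc n)} {C₀ : ℝ}
    (hF : IsADR n F C₀) {w : Euc n} (hw : w ∈ F) {ρ r : ℝ} (hρ : 0 < ρ) (hρr : ρ ≤ r)
    (hρF : ENNReal.ofReal ρ < ediam F) :
    μH[(n : ℝ)] (F ∩ ball w ρ) ≤ ENNReal.ofReal (C₀ * r ^ n) := by
  have hC₀ : 0 ≤ C₀ := zero_le_one.trans hF.2.1
  exact (hF.2.2 w hw ρ hρ hρF).2.trans (ENNReal.ofReal_le_ofReal (by gcongr))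

theorem exists_forall_isADR_hausdorffMeasure_inter_ball_le (n : ℕ) {C₀ : ℝ} (hC₀ : 1 ≤ C₀) :
    ∃ C₁ : ℝ, 1 ≤ C₁ ∧ ∀ F : Set (Euc n), IsADR n F C₀ → ∀ (x : Euc n) (r : ℝ), 0 < r →
      μH[(n : ℝ)] (F ∩ ball x r) ≤ ENNReal.ofReal (C₁ * r ^ n) := by
  obtain ⟨T, hT⟩ := exists_finset_forall_closedBall_subset_biUnion_ball (Euc n)
  have hC₁ : 1 ≤ (T.card + 1) * C₀ := by nlinarith [T.card.cast_nonneg (α := ℝ)]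
  refine ⟨(T.card + 1) * C₀, hC₁, fun F hF x r hr => ?_⟩
  have hcard : (T.card : ℝ≥0∞) * ENNReal.ofReal (C₀ * r ^ n) ≤
      ENNReal.ofReal ((T.card + 1) * C₀ * r ^ n) := by
    rw [← ENNReal.ofReal_natCast, ← ENNReal.ofReal_mul (by positivity)]
    exact ENNReal.ofReal_le_ofReal (by nlinarith [T.card.cast_nonneg (α := ℝ), pow_pos hr n])
  have hclosedBall : ∀ c d, 0 < d → d ≤ r → ENNReal.ofReal (d / 2) < ediam F →
      μH[(n : ℝ)] (F ∩ closedBall c d) ≤ ENNReal.ofReal ((T.card + 1) * C₀ * r ^ n) :=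
    fun c d hd hdr hdF => (measure_inter_closedBall_le_card_mul _ hT hd fun w hw =>
      hF.hausdorffMeasure_inter_ball_le hw (by positivity) (by linarith) hdF).trans hcard
  rcases lt_or_ge (ENNReal.ofReal (r / 2)) (ediam F) with hlarge | hsmall
  · exact (measure_mono (inter_subset_inter_right _ ball_subset_closedBall)).trans
      (hclosedBall x r hr le_rfl hlarge)
  rcases F.subsingleton_or_nontrivial with hsub | hnt
  · refine (measure_mono inter_subset_left).trans ((hsub.hausdorffMeasure_le_ofReal_pow n r).trans
      (ENNReal.ofReal_le_ofReal (le_mul_of_one_le_left (by positivity) hC₁)))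
  obtain ⟨w, hw⟩ := hnt.nonempty
  have hbdd : Bornology.IsBounded F :=
    isBounded_iff_ediam_ne_top.2 (ne_top_of_le_ne_top ENNReal.ofReal_ne_top hsmall)
  have hdiam : ediam F = ENNReal.ofReal (diam F) := by
    rw [diam, ENNReal.ofReal_toReal (isBounded_iff_ediam_ne_top.1 hbdd)]
  have hpos : 0 < diam F := diam_pos hnt hbdd
  have hdiam_le : diam F ≤ r := by
    rw [hdiam, ENNReal.ofReal_le_ofReal_iff (by positivity)] at hsmall
    linarith
  have hFsub : F ⊆ F ∩ closedBall w (diam F) := fun y hy => ⟨hy, dist_le_diam_of_mem hbdd hy hw⟩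
  refine (measure_mono (inter_subset_left.trans hFsub)).trans
    (hclosedBall w _ hpos hdiam_le ?_)
  rw [hdiam]
  exact (ENNReal.ofReal_lt_ofReal_iff hpos).2 (by linarith)

theorem TotallyBounded.exists_finset_separated_cover {X : Type*} [PseudoMetricSpace X]
    {s : Set X} (hs : TotallyBounded s) {δ : ℝ} (hδ : 0 < δ) :
    ∃ u : Finset X, ↑u ⊆ s ∧ (u : Set X).Pairwise (fun a b => δ < dist a b) ∧
      s ⊆ ⋃ z ∈ u, closedBall z δ := by
  set ε : ℝ≥0 := δ.toNNReal
  have hε : ε ≠ 0 := by simpa [ε] using hδ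
  have hpack : packingNumber ε s ≠ ⊤ := by
    obtain ⟨N, -, hN, hcover⟩ := exists_finite_isCover_of_totallyBounded (ε := ε / 2)
      (by simpa using hε) hs
    refine ne_top_of_le_ne_top (encard_ne_top_iff.2 hN) ?_
    calc packingNumber ε s = packingNumber (2 * (ε / 2)) s := by
          rw [mul_div_cancel₀ _ two_ne_zero]
      _ ≤ externalCoveringNumber (ε / 2) s := packingNumber_two_mul_le_externalCoveringNumber _ _
      _ ≤ N.encard := hcover.externalCoveringNumber_le_encard
  have hfin : (maximalSeparatedSet ε s).Finite := by
    rw [← encard_ne_top_iff, encard_maximalSeparatedSet hpack]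
    exact hpack
  refine ⟨hfin.toFinset, by simpa using maximalSeparatedSet_subset, ?_, ?_⟩
  · intro a ha b hb hab
    have hsep : (ε : ℝ≥0∞) < edist a b :=
      isSeparated_maximalSeparatedSet (by simpa using ha) (by simpa using hb) hab
    rwa [edist_dist, ← ENNReal.ofReal_coe_nnreal, Real.coe_toNNReal _ hδ.le,
      ENNReal.ofReal_lt_ofReal_iff_of_nonneg hδ.le] at hsep
  · simpa [ε, Real.coe_toNNReal _ hδ.le] using
      isCover_iff_subset_iUnion_closedBall.1 (isCover_maximalSeparatedSet hpack)

theorem exists_isOpen_subset_thickening_measure_inter_ball_le {X : Type*} [MetricSpace X]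
    [ProperSpace X] [MeasurableSpace X] [OpensMeasurableSpace X] (μ : Measure X) {n : ℕ}
    {C₀ C₁ l : ℝ} {E F Q : Set X} (hC₀ : 1 ≤ C₀) (hl : 0 < l)
    (hF : ∀ y ρ, 0 < ρ → μ (F ∩ ball y ρ) ≤ ENNReal.ofReal (C₁ * ρ ^ n))
    (hE : ∀ q ∈ Q, ENNReal.ofReal (C₀⁻¹ * l ^ n) ≤ μ (E ∩ ball q l))
    (hQ : Q.Nonempty) (hFQ : F ⊆ {z | infDist z Q ≤ C₀ * l}) (x : X) (r : ℝ) :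
    ∃ U, IsOpen U ∧ U ⊆ thickening l Q ∩ ball x (r + 3 * C₀ * l) ∧
      μ (F ∩ ball x r) ≤ ENNReal.ofReal (C₁ * (7 * C₀) ^ n * C₀) * μ.restrict E U := by
  have hl_le : l ≤ C₀ * l := le_mul_of_one_le_left hl.le hC₀
  obtain ⟨u, hu_sub, hu_sep, hu_cover⟩ :=
    ((isCompact_closedBall x r).totallyBounded.subset
      (inter_subset_right.trans ball_subset_closedBall)).exists_finset_separated_cover
      (by positivity : 0 < 6 * C₀ * l)
  have hnear : ∀ z ∈ u, ∃ q ∈ Q, dist z q < 2 * C₀ * l := fun z hz =>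
    (infDist_lt_iff hQ).1 ((hFQ (hu_sub hz).1).trans_lt (by linarith))
  choose! φ hφQ hφz using hnear
  -- `φ` moves points by less than `2 C₀ l`, so the `φ z` stay `2 C₀ l ≥ 2 l` apart.
  have hdisj : (u : Set X).PairwiseDisjoint fun z => ball (φ z) l := by
    intro z hz z' hz' hne
    refine ball_disjoint_ball ?_
    have hzz' : 6 * C₀ * l < dist z z' := hu_sep hz hz' hne
    linarith [dist_triangle4 z (φ z) (φ z') z', hφz z hz, hφz z' hz', dist_comm z' (φ z')]
  refine ⟨⋃ z ∈ u, ball (φ z) l, isOpen_biUnion fun _ _ => isOpen_ball, ?_, ?_⟩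
  · simp only [subset_inter_iff, iUnion₂_subset_iff]
    refine ⟨fun z hz y hy => mem_thickening_iff.2 ⟨φ z, hφQ z hz, hy⟩, fun z hz y hy => ?_⟩
    rw [mem_ball] at hy ⊢
    linarith [dist_triangle4 y (φ z) z x, hφz z hz, mem_ball.1 (hu_sub hz).2,
      dist_comm z (φ z)]
  have hball : ∀ z ∈ u, μ (F ∩ ball z (7 * C₀ * l)) ≤
      ENNReal.ofReal (C₁ * (7 * C₀) ^ n * C₀) * μ.restrict E (ball (φ z) l) := by
    intro z hz
    rw [Measure.restrict_apply measurableSet_ball, inter_comm _ E]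
    calc μ (F ∩ ball z (7 * C₀ * l)) ≤ ENNReal.ofReal (C₁ * (7 * C₀ * l) ^ n) :=
          hF _ _ (by positivity)
      _ = ENNReal.ofReal (C₁ * (7 * C₀) ^ n * C₀) * ENNReal.ofReal (C₀⁻¹ * l ^ n) := by
        rw [← ENNReal.ofReal_mul' (by positivity)]
        congr 1
        field_simp
        ring
      _ ≤ _ := mul_le_mul_right (hE _ (hφQ z hz)) _
  calc μ (F ∩ ball x r) ≤ ∑ z ∈ u, μ (F ∩ ball z (7 * C₀ * l)) := by
        refine (measure_mono ?_).trans (measure_biUnion_finset_le u _)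
        intro y hy
        obtain ⟨z, hz, hyz⟩ := mem_iUnion₂.1 (hu_cover hy)
        exact mem_iUnion₂.2 ⟨z, hz, hy.1, closedBall_subset_ball (by linarith) hyz⟩
    _ ≤ ∑ z ∈ u, ENNReal.ofReal (C₁ * (7 * C₀) ^ n * C₀) * μ.restrict E (ball (φ z) l) :=
        Finset.sum_le_sum hball
    _ = ENNReal.ofReal (C₁ * (7 * C₀) ^ n * C₀) * μ.restrict E (⋃ z ∈ u, ball (φ z) l) := by
        rw [← Finset.mul_sum, measure_biUnion_finset hdisj fun _ _ => measurableSet_ball]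

theorem tsum_le_of_support_subsingleton {ι : Type*} {f : ι → ℝ≥0∞} {M : ℝ≥0∞}
    (hf : (Function.support f).Subsingleton) (hM : ∀ i, f i ≤ M) : ∑' i, f i ≤ M := by
  rcases hf.eq_empty_or_singleton with h | ⟨i, h⟩
  · simp [Function.support_eq_empty_iff.1 h]
  · rw [tsum_eq_single i fun j hj => Function.notMem_support.1 (h ▸ hj)]
    exact hM i

theorem sDist_le_dist {n : ℕ} {A B : Set (Euc n)} {a b : Euc n} (ha : a ∈ A) (hb : b ∈ B) :
    sDist A B ≤ dist a b :=
  csInf_le ⟨0, by rintro _ ⟨_, _, _, _, rfl⟩; exact dist_nonneg⟩ (mem_image2_of_mem ha hb)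

theorem disjoint_thickening_of_add_le_sDist {n : ℕ} {A B : Set (Euc n)} {a b : ℝ}
    (h : a + b ≤ sDist A B) : Disjoint (thickening a A) (thickening b B) := by
  refine disjoint_left.2 fun z hzA hzB => ?_
  obtain ⟨p, hp, hzp⟩ := mem_thickening_iff.1 hzA
  obtain ⟨q, hq, hzq⟩ := mem_thickening_iff.1 hzB
  linarith [sDist_le_dist hp hq, dist_triangle_left p q z]

section SeparatedFamily

variable {n : ℕ} {C₀ C₁ κ : ℝ} {E : Set (Euc n)} {Q : ℕ → Set (Euc n)} {l : ℕ → ℝ}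
  {S : ℕ → Set (Euc n)}

theorem ofReal_lt_ediam_of_separated (hκ : 1 < κ) (hQE : ∀ j, Q j ⊆ E) (hl : ∀ j, 0 < l j)
    (hQ : ∀ j, (Q j).Nonempty)
    (hsep : ∀ i j, i ≠ j → κ * max (l i) (l j) ≤ sDist (Q i) (Q j)) (j : ℕ) :
    ENNReal.ofReal (l j) < ediam E := by
  obtain ⟨p, hp⟩ := hQ (j + 1)
  obtain ⟨q, hq⟩ := hQ j
  have hlt : l j < dist p q := by
    have := hsep (j + 1) j (by omega)
    nlinarith [le_max_right (l (j + 1)) (l j), hl j, sDist_le_dist hp hq]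
  calc ENNReal.ofReal (l j) < ENNReal.ofReal (dist p q) :=
        (ENNReal.ofReal_lt_ofReal_iff ((hl j).trans hlt)).2 hlt
    _ = edist p q := (edist_dist p q).symm
    _ ≤ ediam E := edist_le_ediam_of_mem (hQE _ hp) (hQE _ hq)

theorem eq_of_lt_of_inter_ball_nonempty (hC₀ : 0 ≤ C₀) (hκ : 2 * C₀ + 4 ≤ κ)
    (hl : ∀ j, 0 < l j) (hQ : ∀ j, (Q j).Nonempty)
    (hsep : ∀ i j, i ≠ j → κ * max (l i) (l j) ≤ sDist (Q i) (Q j))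
    (hSQ : ∀ j, S j ⊆ {Y | infDist Y (Q j) ≤ C₀ * l j})
    {x : Euc n} {r : ℝ} {i j : ℕ} (hi : r < l i)
    (hSi : (S i ∩ ball x r).Nonempty) (hSj : (S j ∩ ball x r).Nonempty) : i = j := by
  have hnear : ∀ k, (S k ∩ ball x r).Nonempty → ∃ q ∈ Q k, dist q x < (C₀ + 1) * l k + r := by
    intro k ⟨y, hyS, hyx⟩
    obtain ⟨q, hq, hyq⟩ := (infDist_lt_iff (hQ k)).1 ((hSQ k hyS).trans_lt
      (by linarith [hl k] : C₀ * l k < (C₀ + 1) * l k))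
    exact ⟨q, hq, by linarith [dist_triangle_left q x y, mem_ball.1 hyx]⟩
  obtain ⟨p, hp, hpx⟩ := hnear i hSi
  obtain ⟨q, hq, hqx⟩ := hnear j hSj
  by_contra hij
  have hmi : (C₀ + 1) * l i ≤ (C₀ + 1) * max (l i) (l j) := by gcongr; exact le_max_left _ _
  have hmj : (C₀ + 1) * l j ≤ (C₀ + 1) * max (l i) (l j) := by gcongr; exact le_max_right _ _
  have hκm : (2 * C₀ + 4) * max (l i) (l j) ≤ κ * max (l i) (l j) :=
    mul_le_mul_of_nonneg_right hκ ((hl i).le.trans (le_max_left _ _))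
  linarith [hsep i j hij, sDist_le_dist hp hq, dist_triangle_right p q x,
    hi.trans_le (le_max_left (l i) (l j))]

theorem tsum_indicator_hausdorffMeasure_inter_ball_le (hC₀ : 1 ≤ C₀) (hκ : 2 ≤ κ)
    (hE : IsADR n E C₀) (hQE : ∀ j, Q j ⊆ E) (hl : ∀ j, 0 < l j) (hQ : ∀ j, (Q j).Nonempty)
    (hsep : ∀ i j, i ≠ j → κ * max (l i) (l j) ≤ sDist (Q i) (Q j))
    (hE_upper : ∀ y ρ, 0 < ρ → μH[(n : ℝ)] (E ∩ ball y ρ) ≤ ENNReal.ofReal (C₁ * ρ ^ n))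
    (hS_upper : ∀ j y ρ, 0 < ρ → μH[(n : ℝ)] (S j ∩ ball y ρ) ≤ ENNReal.ofReal (C₁ * ρ ^ n))
    (hSQ : ∀ j, S j ⊆ {Y | infDist Y (Q j) ≤ C₀ * l j}) (x : Euc n) {r : ℝ} (hr : 0 < r) :
    ∑' j, {j | l j ≤ r}.indicator (fun j => μH[(n : ℝ)] (S j ∩ ball x r)) j ≤
      ENNReal.ofReal (C₁ * (7 * C₀) ^ n * C₀) * ENNReal.ofReal (C₁ * (4 * C₀ * r) ^ n) := by
  set c := ENNReal.ofReal (C₁ * (7 * C₀) ^ n * C₀)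
  have hU : ∀ j, ∃ U, IsOpen U ∧ U ⊆ thickening (l j) (Q j) ∩ ball x (4 * C₀ * r) ∧
      {j | l j ≤ r}.indicator (fun j => μH[(n : ℝ)] (S j ∩ ball x r)) j ≤
        c * μH[(n : ℝ)].restrict E U := by
    intro j
    by_cases hjr : l j ≤ r
    · have hE_lower : ∀ q ∈ Q j,
          ENNReal.ofReal (C₀⁻¹ * l j ^ n) ≤ μH[(n : ℝ)] (E ∩ ball q (l j)) :=
        fun q hq => (hE.2.2 q (hQE j hq) (l j) (hl j)
          (ofReal_lt_ediam_of_separated (by linarith) hQE hl hQ hsep j)).1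
      obtain ⟨U, hUo, hUsub, hUμ⟩ := exists_isOpen_subset_thickening_measure_inter_ball_le
        μH[(n : ℝ)] hC₀ (hl j) (hS_upper j) hE_lower (hQ j) (hSQ j) x r
      refine ⟨U, hUo, hUsub.trans (inter_subset_inter_right _ (ball_subset_ball ?_)), ?_⟩
      · nlinarith
      · rwa [indicator_of_mem (show j ∈ {j | l j ≤ r} from hjr)]
    · refine ⟨∅, isOpen_empty, empty_subset _, ?_⟩
      rw [indicator_of_notMem (show j ∉ {j | l j ≤ r} from hjr)]
      exact zero_le
  choose U hUo hUsub hUμ using hU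
  have hdisj : Pairwise (Function.onFun Disjoint U) := by
    intro i j hij
    refine (disjoint_thickening_of_add_le_sDist ?_).mono ((hUsub i).trans inter_subset_left)
      ((hUsub j).trans inter_subset_left)
    have hm : 0 ≤ max (l i) (l j) := (hl i).le.trans (le_max_left _ _)
    nlinarith [hsep i j hij, le_max_left (l i) (l j), le_max_right (l i) (l j)]
  calc ∑' j, {j | l j ≤ r}.indicator (fun j => μH[(n : ℝ)] (S j ∩ ball x r)) j
      ≤ ∑' j, c * μH[(n : ℝ)].restrict E (U j) := ENNReal.tsum_le_tsum hUμ
    _ = c * μH[(n : ℝ)].restrict E (⋃ j, U j) := by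
      rw [ENNReal.tsum_mul_left, measure_iUnion hdisj fun j => (hUo j).measurableSet]
    _ ≤ c * μH[(n : ℝ)] (E ∩ ball x (4 * C₀ * r)) := by
      rw [inter_comm, ← Measure.restrict_apply measurableSet_ball]
      exact mul_le_mul_right (measure_mono (iUnion_subset fun j => (hUsub j).trans
        inter_subset_right)) _
    _ ≤ c * ENNReal.ofReal (C₁ * (4 * C₀ * r) ^ n) :=
      mul_le_mul_right (hE_upper x _ (by positivity)) _

theorem hausdorffMeasure_iUnion_inter_ball_le (hC₀ : 1 ≤ C₀) (hκ : 2 * C₀ + 4 ≤ κ)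
    (hE : IsADR n E C₀) (hQE : ∀ j, Q j ⊆ E) (hl : ∀ j, 0 < l j) (hQ : ∀ j, (Q j).Nonempty)
    (hsep : ∀ i j, i ≠ j → κ * max (l i) (l j) ≤ sDist (Q i) (Q j))
    (hE_upper : ∀ y ρ, 0 < ρ → μH[(n : ℝ)] (E ∩ ball y ρ) ≤ ENNReal.ofReal (C₁ * ρ ^ n))
    (hS_upper : ∀ j y ρ, 0 < ρ → μH[(n : ℝ)] (S j ∩ ball y ρ) ≤ ENNReal.ofReal (C₁ * ρ ^ n))
    (hSQ : ∀ j, S j ⊆ {Y | infDist Y (Q j) ≤ C₀ * l j}) (x : Euc n) {r : ℝ} (hr : 0 < r) :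
    μH[(n : ℝ)] ((⋃ j, S j) ∩ ball x r) ≤ ENNReal.ofReal (C₁ * r ^ n) +
      ENNReal.ofReal (C₁ * (7 * C₀) ^ n * C₀) * ENNReal.ofReal (C₁ * (4 * C₀ * r) ^ n) := by
  set f := fun j => μH[(n : ℝ)] (S j ∩ ball x r)
  have hsplit : ∀ j, f j = {j | l j ≤ r}.indicator f j + {j | r < l j}.indicator f j := by
    have hcompl : {j | l j ≤ r}ᶜ = {j | r < l j} := by ext; simp
    intro j
    rw [← hcompl]
    exact (congrFun (indicator_self_add_compl _ f) j).symm
  have hbig : ∑' j, {j | r < l j}.indicator f j ≤ ENNReal.ofReal (C₁ * r ^ n) := by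
    refine tsum_le_of_support_subsingleton ?_ fun j =>
      (indicator_le_self _ f j).trans (hS_upper j x r hr)
    rw [support_indicator]
    exact fun i ⟨hi, hfi⟩ j ⟨_, hfj⟩ => eq_of_lt_of_inter_ball_nonempty (by linarith) hκ hl hQ
      hsep hSQ hi (nonempty_of_measure_ne_zero hfi) (nonempty_of_measure_ne_zero hfj)
  calc μH[(n : ℝ)] ((⋃ j, S j) ∩ ball x r) ≤ ∑' j, f j := by
        rw [iUnion_inter]
        exact measure_iUnion_le _
    _ = ∑' j, {j | l j ≤ r}.indicator f j + ∑' j, {j | r < l j}.indicator f j := by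
        rw [← ENNReal.tsum_add]
        exact tsum_congr hsplit
    _ ≤ _ := by
        rw [add_comm]
        exact add_le_add hbig (tsum_indicator_hausdorffMeasure_inter_ball_le hC₀
          (by nlinarith) hE hQE hl hQ hsep hE_upper hS_upper hSQ x hr)

end SeparatedFamily

theorem upper_ADR_of_separated_union_general (n : ℕ) (C₀ : ℝ) (hC₀ : 1 ≤ C₀) :
    ∃ κ₀ : ℝ, 0 < κ₀ ∧ ∀ κ : ℝ, κ₀ ≤ κ →
      ∃ C : ℝ, 0 < C ∧
        ∀ E : Set (Euc n), IsADR n E C₀ →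
        ∀ (Q : ℕ → Set (Euc n)) (l : ℕ → ℝ),
          (∀ j, Q j ⊆ E) →
          (∀ i j, i ≠ j → Q i ∩ Q j = ∅) →
          (∀ j, 0 < l j) →
          (∀ j, Metric.diam (Q j) ≤ C₀ * l j) →
          (∀ j, ENNReal.ofReal (C₀⁻¹ * l j ^ n) ≤ μH[(n : ℝ)] (Q j)) →
          (∀ i j, i ≠ j → κ * max (l i) (l j) ≤ sDist (Q i) (Q j)) →
        ∀ S₀ : Set (Euc n), S₀ = ∅ ∨ IsADR n S₀ C₀ →
        ∀ S : ℕ → Set (Euc n),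
          (∀ j, IsADR n (S j) C₀) →
          (∀ j, S j ⊆ {Y : Euc n | Metric.infDist Y (Q j) ≤ C₀ * l j}) →
        ∀ (x : Euc n) (r : ℝ), 0 < r →
          μH[(n : ℝ)] ((S₀ ∪ ⋃ j, S j) ∩ ball x r) ≤ ENNReal.ofReal (C * r ^ n) := by
  obtain ⟨C₁, hC₁, hA⟩ := exists_forall_isADR_hausdorffMeasure_inter_ball_le n hC₀
  refine ⟨2 * C₀ + 4, by linarith, fun κ hκ =>
    ⟨2 * C₁ + C₁ * (7 * C₀) ^ n * C₀ * (C₁ * (4 * C₀) ^ n), by positivity, ?_⟩⟩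
  intro E hE Q l hQE _ hl _ hQl hsep S₀ hS₀ S hS hSQ x r hr
  have hQ : ∀ j, (Q j).Nonempty := fun j =>
    nonempty_of_measure_ne_zero ((ENNReal.ofReal_pos.2 (by have := hl j; positivity)).trans_le
      (hQl j)).ne'
  have hS₀r : μH[(n : ℝ)] (S₀ ∩ ball x r) ≤ ENNReal.ofReal (C₁ * r ^ n) := by
    rcases hS₀ with rfl | hS₀
    · simp
    · exact hA S₀ hS₀ x r hr
  calc μH[(n : ℝ)] ((S₀ ∪ ⋃ j, S j) ∩ ball x r)
      ≤ μH[(n : ℝ)] (S₀ ∩ ball x r) + μH[(n : ℝ)] ((⋃ j, S j) ∩ ball x r) := by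
        rw [union_inter_distrib_right]
        exact measure_union_le _ _
    _ ≤ ENNReal.ofReal (C₁ * r ^ n) + (ENNReal.ofReal (C₁ * r ^ n) +
          ENNReal.ofReal (C₁ * (7 * C₀) ^ n * C₀) * ENNReal.ofReal (C₁ * (4 * C₀ * r) ^ n)) :=
        add_le_add hS₀r (hausdorffMeasure_iUnion_inter_ball_le hC₀ hκ hE hQE hl hQ hsep
          (hA E hE) (fun j => hA _ (hS j)) hSQ x hr)
    _ = ENNReal.ofReal ((2 * C₁ + C₁ * (7 * C₀) ^ n * C₀ * (C₁ * (4 * C₀) ^ n)) * r ^ n) := by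
        rw [← ENNReal.ofReal_mul (by positivity), ← ENNReal.ofReal_add (by positivity)
          (by positivity), ← ENNReal.ofReal_add (by positivity) (by positivity), mul_pow]
        ring_nf

/-- **Upper ADR bound for unions of separated ADR pieces.** Let `E` be
`n`-dimensional ADR with constant `C₀` and let `{Q_j}` be pairwise disjoint subsets
of `E` with lengths `ℓ_j`, `diam Q_j ≤ C₀ ℓ_j`, `H^n(Q_j) ≥ C₀⁻¹ ℓ_jⁿ`, mutually
`κ`-separated for `κ ≥ κ₀(n, C₀)`. If `S₀` is empty or `n`-dimensional ADR with
constant `C₀`, and each `S_j` is `n`-dimensional ADR with constant `C₀` and lies in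
a `C₀ ℓ_j`-neighborhood of `Q_j`, then `S = S₀ ∪ ⋃_j S_j` satisfies the upper ADR
bound `H^n(S ∩ B(x,r)) ≤ C rⁿ` for all `x`, `r > 0`, with `C = C(n, C₀, κ)`. -/
theorem upper_ADR_of_separated_union (n : ℕ) (hn : 1 ≤ n) (C₀ : ℝ) (hC₀ : 1 ≤ C₀) :
    ∃ κ₀ : ℝ, 0 < κ₀ ∧ ∀ κ : ℝ, κ₀ ≤ κ →
      ∃ C : ℝ, 0 < C ∧
        ∀ E : Set (Euc n), IsADR n E C₀ →
        ∀ (Q : ℕ → Set (Euc n)) (l : ℕ → ℝ),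
          (∀ j, Q j ⊆ E) →
          (∀ i j, i ≠ j → Q i ∩ Q j = ∅) →
          (∀ j, 0 < l j) →
          (∀ j, Metric.diam (Q j) ≤ C₀ * l j) →
          (∀ j, ENNReal.ofReal (C₀⁻¹ * l j ^ n) ≤ μH[(n : ℝ)] (Q j)) →
          (∀ i j, i ≠ j → κ * max (l i) (l j) ≤ sDist (Q i) (Q j)) →
        ∀ S₀ : Set (Euc n), S₀ = ∅ ∨ IsADR n S₀ C₀ →
        ∀ S : ℕ → Set (Euc n),
          (∀ j, IsADR n (S j) C₀) →
          (∀ j, S j ⊆ {Y : Euc n | Metric.infDist Y (Q j) ≤ C₀ * l j}) →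
        ∀ (x : Euc n) (r : ℝ), 0 < r →
          μH[(n : ℝ)] ((S₀ ∪ ⋃ j, S j) ∩ ball x r) ≤ ENNReal.ofReal (C * r ^ n) :=
  upper_ADR_of_separated_union_general n C₀ hC₀
end
end

section
/- Let n ≥ 1 and c ∈ (0,1). There is a constant c' > 0, depending only on n and c, such that the following holds. Let F ⊂ ℝ^{n+1} be a closed set, let B(x,r) be a ball, and suppose there exist two balls B₁ and B₂, each of radius cr and contained in B(x,r), lying in two distinct connected components of ℝ^{n+1} ∖ F. If H^n(F ∩ B(x,r)) < ∞, then H^n(F ∩ B(x,r)) ≥ c' r^n. (In particular, an open set with locally finite H^n boundary measure satisfying the 2-sided corkscrew condition has lower ADR boundary.) -/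
open Metric MeasureTheory Set
open scoped NNReal ENNReal

noncomputable section

/-! Let `P` be the orthogonal projection onto the hyperplane orthogonal to `X₂ - X₁`. For each
`a ∈ B(X₁, cr)` the segment from `a` to `a + (X₂ - X₁) ∈ B(X₂, cr)` stays in `B(x, r)` and joins
two components of `Fᶜ`, so it meets `F`; since `P` is constant on it, `P(F ∩ B(x, r))` contains
the `n`-dimensional disc `P(B(X₁, cr))` of radius `cr`. As `P` is `1`-Lipschitz,
`Hⁿ(F ∩ B(x, r)) ≥ Hⁿ(disc) = ωₙ (cr)ⁿ`. -/

open Module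

theorem exists_mem_segment_notMem_of_connectedComponentIn_ne {E : Type*} [AddCommGroup E]
    [Module ℝ E] [TopologicalSpace E] [IsTopologicalAddGroup E] [ContinuousSMul ℝ E]
    {U S T : Set E} {x y a b : E} (hS : IsPreconnected S) (hT : IsPreconnected T)
    (hSU : S ⊆ U) (hTU : T ⊆ U) (hx : x ∈ S) (ha : a ∈ S) (hy : y ∈ T) (hb : b ∈ T)
    (hne : connectedComponentIn U x ≠ connectedComponentIn U y) :
    ∃ p ∈ segment ℝ a b, p ∉ U := by
  by_contra! hsegU
  have hchain : IsPreconnected (S ∪ segment ℝ a b ∪ T) :=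
    (hS.union a ha (left_mem_segment ℝ a b) (convex_segment a b).isPreconnected).union b
      (Or.inr (right_mem_segment ℝ a b)) hb hT
  have hsub : S ∪ segment ℝ a b ∪ T ⊆ U := union_subset (union_subset hSU hsegU) hTU
  exact hne <| connectedComponentIn_eq <|
    hchain.subset_connectedComponentIn (Or.inl (Or.inl hx)) hsub (Or.inr hy)

theorem image_ball_subset_image_inter_of_connectedComponentIn_ne {E W : Type*}
    [NormedAddCommGroup E] [NormedSpace ℝ E] [AddCommGroup W] [Module ℝ W]
    (f : E →ₗ[ℝ] W) {F : Set E} {x X₁ X₂ : E} {r ρ : ℝ}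
    (h₁ : ball X₁ ρ ⊆ ball x r) (h₂ : ball X₂ ρ ⊆ ball x r)
    (hF₁ : ball X₁ ρ ⊆ Fᶜ) (hF₂ : ball X₂ ρ ⊆ Fᶜ)
    (hne : connectedComponentIn Fᶜ X₁ ≠ connectedComponentIn Fᶜ X₂) (hf : f X₁ = f X₂) :
    f '' ball X₁ ρ ⊆ f '' (F ∩ ball x r) := by
  rintro _ ⟨a, ha, rfl⟩
  have hρ : 0 < ρ := pos_of_mem_ball ha
  have hb : a + (X₂ - X₁) ∈ ball X₂ ρ := by
    rwa [mem_ball, dist_eq_norm, show a + (X₂ - X₁) - X₂ = a - X₁ by abel, ← dist_eq_norm]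
  obtain ⟨p, hp, hpF⟩ := exists_mem_segment_notMem_of_connectedComponentIn_ne
    (convex_ball X₁ ρ).isPreconnected (convex_ball X₂ ρ).isPreconnected hF₁ hF₂
    (mem_ball_self hρ) ha (mem_ball_self hρ) hb hne
  refine ⟨p, ⟨not_not.mp hpF, (convex_ball x r).segment_subset (h₁ ha) (h₂ hb) hp⟩, ?_⟩
  have hfb : f (a + (X₂ - X₁)) = f a := by simp [hf]
  have hfp : f p ∈ segment ℝ (f a) (f (a + (X₂ - X₁))) := by
    rw [← f.coe_toAffineMap, ← image_segment]
    exact mem_image_of_mem _ hp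
  rwa [hfb, segment_same, mem_singleton_iff] at hfp

theorem Submodule.ball_subset_image_orthogonalProjectionOnto {E : Type*}
    [NormedAddCommGroup E] [InnerProductSpace ℝ E] (K : Submodule ℝ E)
    [K.HasOrthogonalProjection] (X : E) (ρ : ℝ) :
    ball (K.orthogonalProjectionOnto X) ρ ⊆ K.orthogonalProjectionOnto '' ball X ρ := by
  intro k hk
  refine ⟨X + (k - K.orthogonalProjectionOnto X : K), ?_, ?_⟩
  · simpa [mem_ball, dist_eq_norm] using hk
  · rw [map_add, K.orthogonalProjectionOnto_mem_subspace_eq_self, add_sub_cancel]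

theorem hausdorffMeasure_ball_of_finrank_eq {K : Type*} [NormedAddCommGroup K]
    [InnerProductSpace ℝ K] [FiniteDimensional ℝ K] [MeasurableSpace K] [BorelSpace K] {d : ℕ}
    (hd : finrank ℝ K = d)
    (k : K) {ρ : ℝ} (hρ : 0 < ρ) :
    μH[d] (ball k ρ) = ENNReal.ofReal (ρ ^ d) * μH[d] (ball (0 : EuclideanSpace ℝ (Fin d)) 1) := by
  subst hd
  rw [Measure.addHaar_ball_of_pos μH[finrank ℝ K] k hρ,
    ← (stdOrthonormalBasis ℝ K).repr.isometry.hausdorffMeasure_image (Or.inl (by positivity)),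
    LinearIsometryEquiv.image_ball, map_zero]

theorem lower_ADR_of_two_sided_corkscrew_general
    (n : ℕ) (c : ℝ) (hc0 : 0 < c) :
    ∃ c' : ℝ, 0 < c' ∧
      ∀ F : Set (Euc n), IsClosed F →
      ∀ (x : Euc n) (r : ℝ), 0 < r →
      ∀ X₁ X₂ : Euc n,
        ball X₁ (c * r) ⊆ ball x r → ball X₂ (c * r) ⊆ ball x r →
        ball X₁ (c * r) ⊆ Fᶜ → ball X₂ (c * r) ⊆ Fᶜ →
        connectedComponentIn Fᶜ X₁ ≠ connectedComponentIn Fᶜ X₂ →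
        μH[(n : ℝ)] (F ∩ ball x r) < ⊤ →
        ENNReal.ofReal (c' * r ^ n) ≤ μH[(n : ℝ)] (F ∩ ball x r) := by
  set ω := μH[(n : ℝ)] (ball (0 : EuclideanSpace ℝ (Fin n)) 1)
  have hω : ω ≠ ⊤ := measure_ball_lt_top.ne
  refine ⟨c ^ n * ω.toReal, mul_pos (pow_pos hc0 n)
    (ENNReal.toReal_pos (measure_ball_pos _ _ one_pos).ne' hω), ?_⟩
  intro F _ x r hr X₁ X₂ h₁ h₂ hF₁ hF₂ hne _
  have hv : X₂ - X₁ ≠ 0 := sub_ne_zero.mpr fun h ↦ hne (h ▸ rfl)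
  have : Fact (finrank ℝ (Euc n) = n + 1) := ⟨finrank_euclideanSpace_fin⟩
  set K := (ℝ ∙ (X₂ - X₁))ᗮ
  set P := K.orthogonalProjectionOnto
  have hP : P X₁ = P X₂ := by
    rw [eq_comm, ← sub_eq_zero, ← map_sub]
    exact Submodule.orthogonalProjectionOnto_apply_of_mem_orthogonal
      (Submodule.le_orthogonal_orthogonal _ (Submodule.mem_span_singleton_self _))
  calc ENNReal.ofReal (c ^ n * ω.toReal * r ^ n)
      = μH[(n : ℝ)] (ball (P X₁) (c * r)) := by
        rw [hausdorffMeasure_ball_of_finrank_eq (Submodule.finrank_orthogonal_span_singleton hv)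
          _ (by positivity), mul_right_comm, ← mul_pow, ENNReal.ofReal_mul (by positivity),
          ENNReal.ofReal_toReal hω]
    _ ≤ μH[(n : ℝ)] (P '' ball X₁ (c * r)) :=
        measure_mono (K.ball_subset_image_orthogonalProjectionOnto X₁ _)
    _ ≤ μH[(n : ℝ)] (P '' (F ∩ ball x r)) := measure_mono <|
        image_ball_subset_image_inter_of_connectedComponentIn_ne P.toLinearMap h₁ h₂ hF₁ hF₂ hne
          hP
    _ ≤ μH[(n : ℝ)] (F ∩ ball x r) := by
        simpa using K.lipschitzWith_orthogonalProjectionOnto.hausdorffMeasure_image_le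
          (by positivity) (F ∩ ball x r)

/-- **Lower ADR bound via the 2-sided corkscrew condition and the isoperimetric
inequality.** Let `n ≥ 1`, `c ∈ (0,1)`. There is `c' > 0` depending only on `n` and
`c` such that: if `F ⊆ ℝ^{n+1}` is closed and `B(x,r)` contains two balls of radius
`c r` lying in two distinct connected components of `ℝ^{n+1} ∖ F`, and
`H^n(F ∩ B(x,r)) < ∞`, then `H^n(F ∩ B(x,r)) ≥ c' rⁿ`. -/
theorem lower_ADR_of_two_sided_corkscrew
    (n : ℕ) (hn : 1 ≤ n) (c : ℝ) (hc0 : 0 < c) (hc1 : c < 1) :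
    ∃ c' : ℝ, 0 < c' ∧
      ∀ F : Set (Euc n), IsClosed F →
      ∀ (x : Euc n) (r : ℝ), 0 < r →
      ∀ X₁ X₂ : Euc n,
        ball X₁ (c * r) ⊆ ball x r → ball X₂ (c * r) ⊆ ball x r →
        ball X₁ (c * r) ⊆ Fᶜ → ball X₂ (c * r) ⊆ Fᶜ →
        connectedComponentIn Fᶜ X₁ ≠ connectedComponentIn Fᶜ X₂ →
        μH[(n : ℝ)] (F ∩ ball x r) < ⊤ →
        ENNReal.ofReal (c' * r ^ n) ≤ μH[(n : ℝ)] (F ∩ ball x r) :=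
  lower_ADR_of_two_sided_corkscrew_general n c hc0
end
end

section
/- Let n ≥ 1 and let Ω ⊂ ℝ^{n+1} be a bounded open set whose boundary ∂Ω is n-dimensional ADR with constant C₀, and suppose every connected component Ω_j of Ω has n-dimensional ADR boundary with constant C₀. Fix one component Ω_{j₀}, and let μ be a finite Borel measure on ∂Ω carried by ∂Ω_{j₀} (i.e., μ(∂Ω ∖ ∂Ω_{j₀}) = 0). Assume there are C₁ ≥ 1 and θ > 0 such that for every z ∈ ∂Ω_{j₀} and every 0 < ρ < diam ∂Ω_{j₀}, setting Δ_* := B(z,ρ) ∩ ∂Ω_{j₀}, one has μ(A') ≤ C₁ (H^n(A')/H^n(Δ_*))^θ μ(Δ_*) for every Borel A' ⊆ Δ_*. Then there is C₂, depending only on n, C₀, C₁ and θ, such that for every x ∈ ∂Ω and every 0 < r < min{diam ∂Ω_{j₀}, (1/2) diam ∂Ω}, setting Δ := B(x,r) ∩ ∂Ω and 2Δ := B(x,2r) ∩ ∂Ω, one has μ(A) ≤ C₂ (H^n(A)/H^n(Δ))^θ μ(2Δ) for every Borel A ⊆ Δ. -/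
/-!
Only the part of `A` lying on `∂Ω_{j₀}` carries `μ`-mass. Cover it by at most `5^{n+1}` balls
`B(z, r/2)` centred on `∂Ω_{j₀} ∩ B(x, r)` (a maximal separated net). On each of them the `A_∞`
estimate of the component applies, and ADR gives
`Hⁿ(B(x, r) ∩ ∂Ω) ≤ C₀ rⁿ = C₀² 2ⁿ · C₀⁻¹ (r/2)ⁿ ≤ C₀² 2ⁿ Hⁿ(B(z, r/2) ∩ ∂Ω_{j₀})`, while
`B(z, r/2) ⊆ B(x, 2r)`. Summing over the net gives `C₂ = 5^{n+1} C₁ (C₀² 2ⁿ)^θ`.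
-/

open Metric MeasureTheory Set
open scoped NNReal ENNReal

noncomputable section

section Packing

variable {E : Type*} [NormedAddCommGroup E] [NormedSpace ℝ E] [FiniteDimensional ℝ E]

/-- Rescaling `ball x r` to `ball 0 2` reduces this to Besicovitch's volume count. -/
lemma card_le_of_pairwise_half_le_dist {T : Finset E} {x : E} {r : ℝ} (hr : 0 < r)
    (hT : ∀ c ∈ T, dist c x ≤ r) (hsep : (T : Set E).Pairwise fun a b => r / 2 ≤ dist a b) :
    T.card ≤ 5 ^ Module.finrank ℝ E := by
  classical
  set f : E → E := fun c => (2 / r) • (c - x)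
  have hf : ∀ a b, ‖f a - f b‖ = 2 / r * dist a b := fun a b => by
    rw [dist_eq_norm, ← smul_sub, sub_sub_sub_cancel_right, norm_smul_of_nonneg (by positivity)]
  have hf_inj : f.Injective := fun a b hab => by
    have := hf a b
    rw [hab, sub_self, norm_zero, eq_comm, mul_eq_zero] at this
    exact dist_eq_zero.1 (this.resolve_left (by positivity))
  rw [← Finset.card_image_of_injective T hf_inj]
  refine Besicovitch.card_le_of_separated _ ?_ ?_
  · simp only [Finset.forall_mem_image]
    intro c hc
    have hfx : f x = 0 := by simp [f]
    rw [← sub_zero (f c), ← hfx, hf, div_mul_eq_mul_div, div_le_iff₀ hr]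
    linarith [hT c hc]
  · simp only [Finset.forall_mem_image]
    rintro a ha b hb hab
    have hab' : a ≠ b := fun h => hab (congrArg f h)
    rw [hf, div_mul_eq_mul_div, le_div_iff₀ hr]
    linarith [hsep ha hb hab']

/-- A maximal `r/2`-separated subset of `s` is such a net. -/
lemma exists_finset_card_le_subset_biUnion_ball_half {s : Set E} {x : E} {r : ℝ} (hr : 0 < r)
    (hs : s ⊆ ball x r) :
    ∃ T : Finset E, ↑T ⊆ s ∧ T.card ≤ 5 ^ Module.finrank ℝ E ∧ s ⊆ ⋃ z ∈ T, ball z (r / 2) := by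
  classical
  by_contra! hnet
  have hcard : ∀ T : Finset E, ↑T ⊆ s → (T : Set E).Pairwise (fun a b => r / 2 ≤ dist a b) →
      T.card ≤ 5 ^ Module.finrank ℝ E := fun T hTs hsep =>
    card_le_of_pairwise_half_le_dist hr (fun c hc => (hs (hTs hc)).le) hsep
  have hgrow : ∀ k : ℕ, ∃ T : Finset E, ↑T ⊆ s ∧
      (T : Set E).Pairwise (fun a b => r / 2 ≤ dist a b) ∧ T.card = k := by
    intro k
    induction k with
    | zero => exact ⟨∅, by simp⟩
    | succ k ih =>
      obtain ⟨T, hTs, hsep, rfl⟩ := ih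
      obtain ⟨y, hys, hyT⟩ := not_subset.1 (hnet T hTs (hcard T hTs hsep))
      simp only [mem_iUnion₂, mem_ball, not_exists, not_lt] at hyT
      have hyT' : y ∉ T := fun hy => by linarith [hyT y hy, dist_self y]
      refine ⟨insert y T, ?_, ?_, Finset.card_insert_of_notMem hyT'⟩
      · rw [Finset.coe_insert]
        exact insert_subset hys hTs
      · rw [Finset.coe_insert]
        exact hsep.insert fun z hz _ => ⟨hyT z hz, dist_comm y z ▸ hyT z hz⟩
  obtain ⟨T, hTs, hsep, hT⟩ := hgrow (5 ^ Module.finrank ℝ E + 1)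
  have := hcard T hTs hsep
  omega

end Packing

lemma frontier_connectedComponentIn_subset {X : Type*} [TopologicalSpace X]
    [LocallyConnectedSpace X] {U : Set X} (hU : IsOpen U) (x : X) :
    frontier (connectedComponentIn U x) ⊆ frontier U := by
  rw [hU.connectedComponentIn.frontier_eq, hU.frontier_eq]
  rintro y ⟨hy_cl, hy_not⟩
  refine ⟨closure_mono (connectedComponentIn_subset U x) hy_cl, fun hyU => hy_not ?_⟩
  obtain ⟨w, hwy, hwx⟩ :=
    mem_closure_iff.1 hy_cl _ hU.connectedComponentIn (mem_connectedComponentIn hyU)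
  rw [connectedComponentIn_eq hwx, ← connectedComponentIn_eq hwy]
  exact mem_connectedComponentIn hyU

lemma ofReal_lt_ediam_of_lt_diam {X : Type*} [PseudoMetricSpace X] {s : Set X} {r : ℝ}
    (hr : 0 < r) (h : r < Metric.diam s) : ENNReal.ofReal r < Metric.ediam s :=
  ((ENNReal.ofReal_lt_ofReal_iff (hr.trans h)).2 h).trans_le ENNReal.ofReal_toReal_le

lemma ENNReal.div_le_mul_div_of_le_mul {a b c K : ℝ≥0∞} (hK : K ≠ 0) (hK' : K ≠ ⊤)
    (h : b ≤ K * c) : a / c ≤ K * (a / b) := by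
  rw [← ENNReal.mul_div_mul_left a c hK hK', ← mul_div_assoc]
  exact ENNReal.div_le_div_left h _

lemma IsADR.hausdorffMeasure_inter_ball_le_s12 {n : ℕ} {F G : Set (Euc n)} {C C' : ℝ}
    (hF : IsADR n F C) (hG : IsADR n G C') {x z : Euc n} (hx : x ∈ F) (hz : z ∈ G) {r s : ℝ}
    (hr : 0 < r) (hs : 0 < s) (hrF : r < Metric.diam F) (hsG : s < Metric.diam G) :
    μH[(n : ℝ)] (F ∩ ball x r) ≤
      ENNReal.ofReal (C * C' * (r / s) ^ n) * μH[(n : ℝ)] (G ∩ ball z s) := by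
  have hC' : 0 < C' := by linarith [hG.2.1]
  calc μH[(n : ℝ)] (F ∩ ball x r) ≤ ENNReal.ofReal (C * r ^ n) :=
        (hF.2.2 x hx r hr (ofReal_lt_ediam_of_lt_diam hr hrF)).2
    _ = ENNReal.ofReal (C * C' * (r / s) ^ n) * ENNReal.ofReal (C'⁻¹ * s ^ n) := by
        rw [← ENNReal.ofReal_mul (by have := hF.2.1; positivity)]
        congr 1
        rw [div_pow]
        field_simp
    _ ≤ ENNReal.ofReal (C * C' * (r / s) ^ n) * μH[(n : ℝ)] (G ∩ ball z s) :=
        mul_le_mul_right (hG.2.2 z hz s hs (ofReal_lt_ediam_of_lt_diam hs hsG)).1 _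

def IsAinfty {n : ℕ} (μ : Measure (Euc n)) (E : Set (Euc n)) (C θ : ℝ) : Prop :=
  ∀ z ∈ E, ∀ ρ : ℝ, 0 < ρ → ρ < Metric.diam E →
    ∀ A' : Set (Euc n), MeasurableSet A' → A' ⊆ ball z ρ ∩ E →
      μ A' ≤ ENNReal.ofReal C * (μH[(n : ℝ)] A' / μH[(n : ℝ)] (ball z ρ ∩ E)) ^ θ *
        μ (ball z ρ ∩ E)

lemma IsAinfty.measure_inter_ball_half_le {n : ℕ} {μ : Measure (Euc n)} {F G : Set (Euc n)}
    {C C' C₁ θ : ℝ} (hμ : IsAinfty μ G C₁ θ) (hθ : 0 ≤ θ) (hF : IsADR n F C)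
    (hG : IsADR n G C') (hGF : G ⊆ F) {x z : Euc n} {r : ℝ} (hx : x ∈ F) (hz : z ∈ G)
    (hzx : z ∈ ball x r) (hr : 0 < r) (hrF : r < Metric.diam F) (hrG : r < Metric.diam G)
    {A : Set (Euc n)} (hA : MeasurableSet A) :
    μ (A ∩ G ∩ ball z (r / 2)) ≤ ENNReal.ofReal (C₁ * (C * C' * 2 ^ n) ^ θ) *
      (μH[(n : ℝ)] A / μH[(n : ℝ)] (ball x r ∩ F)) ^ θ * μ (ball x (2 * r) ∩ F) := by
  set K := C * C' * 2 ^ n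
  have hK : 0 < K := by have := hF.2.1; have := hG.2.1; positivity
  have hcomp :
      μH[(n : ℝ)] (ball x r ∩ F) ≤ ENNReal.ofReal K * μH[(n : ℝ)] (ball z (r / 2) ∩ G) := by
    have := hF.hausdorffMeasure_inter_ball_le_s12 hG hx hz hr (half_pos hr) hrF (by linarith)
    rwa [show r / (r / 2) = 2 by field_simp, inter_comm F, inter_comm G] at this
  have hratio : μH[(n : ℝ)] (A ∩ G ∩ ball z (r / 2)) / μH[(n : ℝ)] (ball z (r / 2) ∩ G) ≤
      ENNReal.ofReal K * (μH[(n : ℝ)] A / μH[(n : ℝ)] (ball x r ∩ F)) :=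
    (ENNReal.div_le_div_right (measure_mono fun y hy => hy.1.1) _).trans
      (ENNReal.div_le_mul_div_of_le_mul (by positivity) ENNReal.ofReal_ne_top hcomp)
  have hball : ball z (r / 2) ∩ G ⊆ ball x (2 * r) ∩ F := fun y hy =>
    ⟨ball_subset_ball' (by linarith [mem_ball.1 hzx]) hy.1, hGF hy.2⟩
  calc μ (A ∩ G ∩ ball z (r / 2))
      ≤ ENNReal.ofReal C₁ * (μH[(n : ℝ)] (A ∩ G ∩ ball z (r / 2)) /
          μH[(n : ℝ)] (ball z (r / 2) ∩ G)) ^ θ * μ (ball z (r / 2) ∩ G) :=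
        hμ z hz (r / 2) (half_pos hr) (by linarith) _
          ((hA.inter hG.1.measurableSet).inter measurableSet_ball) fun y hy => ⟨hy.2, hy.1.2⟩
    _ ≤ ENNReal.ofReal C₁ * (ENNReal.ofReal K * (μH[(n : ℝ)] A /
          μH[(n : ℝ)] (ball x r ∩ F))) ^ θ * μ (ball x (2 * r) ∩ F) :=
        mul_le_mul' (mul_le_mul_right (ENNReal.rpow_le_rpow hratio hθ) _) (measure_mono hball)
    _ = _ := by
        rw [ENNReal.mul_rpow_of_nonneg _ _ hθ, ENNReal.ofReal_rpow_of_pos hK,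
          ENNReal.ofReal_mul' (by positivity)]
        ring

theorem weak_Ainfty_from_component_Ainfty_general
    (n : ℕ) (C₀ C₁ θ : ℝ) (hC₀ : 1 ≤ C₀) (hC₁ : 1 ≤ C₁) (hθ : 0 < θ) :
    ∃ C₂ : ℝ, 0 < C₂ ∧
      ∀ Ω : Set (Euc n), IsOpen Ω → Bornology.IsBounded Ω → Ω.Nonempty →
        IsADR n (frontier Ω) C₀ →
        (∀ z ∈ Ω, IsADR n (frontier (connectedComponentIn Ω z)) C₀) →
      ∀ Ωj : Set (Euc n), (∃ z ∈ Ω, Ωj = connectedComponentIn Ω z) →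
      ∀ μ : Measure (Euc n), IsFiniteMeasure μ →
        μ (frontier Ω)ᶜ = 0 → μ (frontier Ω \ frontier Ωj) = 0 →
        (∀ z ∈ frontier Ωj, ∀ ρ : ℝ, 0 < ρ → ρ < Metric.diam (frontier Ωj) →
          ∀ A' : Set (Euc n), MeasurableSet A' → A' ⊆ ball z ρ ∩ frontier Ωj →
            μ A' ≤ ENNReal.ofReal C₁ *
              (μH[(n : ℝ)] A' / μH[(n : ℝ)] (ball z ρ ∩ frontier Ωj)) ^ θ *
              μ (ball z ρ ∩ frontier Ωj)) →
      ∀ x ∈ frontier Ω, ∀ r : ℝ, 0 < r →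
        r < min (Metric.diam (frontier Ωj)) (Metric.diam (frontier Ω) / 2) →
        ∀ A : Set (Euc n), MeasurableSet A → A ⊆ ball x r ∩ frontier Ω →
          μ A ≤ ENNReal.ofReal C₂ *
            (μH[(n : ℝ)] A / μH[(n : ℝ)] (ball x r ∩ frontier Ω)) ^ θ *
            μ (ball x (2 * r) ∩ frontier Ω) := by
  refine ⟨5 ^ (n + 1) * (C₁ * (C₀ * C₀ * 2 ^ n) ^ θ), by positivity, ?_⟩
  rintro Ω hΩ - - hF hFcomp _ ⟨z₀, hz₀, rfl⟩ μ - - hμG hAinf x hx r hr hrdiam A hA hAsub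
  set G := frontier (connectedComponentIn Ω z₀)
  have hGF : G ⊆ frontier Ω := frontier_connectedComponentIn_subset hΩ z₀
  have hrG : r < Metric.diam G := hrdiam.trans_le (min_le_left _ _)
  have hrF : r < Metric.diam (frontier Ω) := by
    linarith [hrdiam.trans_le (min_le_right _ _), diam_nonneg (s := frontier Ω)]
  obtain ⟨T, hTA, hTcard, hTcov⟩ := exists_finset_card_le_subset_biUnion_ball_half hr
    (s := A ∩ G) fun y hy => (hAsub hy.1).1
  rw [finrank_euclideanSpace_fin] at hTcard
  set c := ENNReal.ofReal (C₁ * (C₀ * C₀ * 2 ^ n) ^ θ) *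
    (μH[(n : ℝ)] A / μH[(n : ℝ)] (ball x r ∩ frontier Ω)) ^ θ * μ (ball x (2 * r) ∩ frontier Ω)
  have hcover : A ∩ G ⊆ ⋃ z ∈ T, A ∩ G ∩ ball z (r / 2) := fun y hy => by
    obtain ⟨z, hz, hyz⟩ := mem_iUnion₂.1 (hTcov hy)
    exact mem_iUnion₂.2 ⟨z, hz, hy, hyz⟩
  calc μ A = μ (A ∩ G) :=
        (measure_inter_conull' (measure_mono_null (sdiff_subset_sdiff_left (hAsub.trans
          inter_subset_right)) hμG)).symm
    _ ≤ ∑ z ∈ T, μ (A ∩ G ∩ ball z (r / 2)) :=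
        (measure_mono hcover).trans (measure_biUnion_finset_le T _)
    _ ≤ ∑ _z ∈ T, c := Finset.sum_le_sum fun z hz =>
        IsAinfty.measure_inter_ball_half_le hAinf hθ.le hF (hFcomp z₀ hz₀) hGF hx (hTA hz).2
          (hAsub (hTA hz).1).1 hr hrF hrG hA
    _ = T.card * c := by rw [Finset.sum_const, nsmul_eq_mul]
    _ ≤ 5 ^ (n + 1) * c := by gcongr; exact_mod_cast hTcard
    _ = _ := by
        rw [ENNReal.ofReal_mul (by positivity), ENNReal.ofReal_pow (by norm_num),
          ENNReal.ofReal_ofNat]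
        ring

/-- **Lemma 5.1.** Let `Ω ⊆ ℝ^{n+1}` be a bounded open set with `n`-dimensional ADR
boundary (constant `C₀`) whose connected components all have ADR boundaries with
constant `C₀`. Fix a component `Ω_{j₀}` and a finite Borel measure `μ` on `∂Ω`
carried by `∂Ω_{j₀}`. If `μ` satisfies an `A_∞`-type estimate, with constants
`(C₁, θ)`, on every surface ball of `∂Ω_{j₀}`, then there is `C₂ = C₂(n, C₀, C₁, θ)`
such that `μ` satisfies the weak-`A_∞` estimate `μ(A) ≤ C₂ (Hⁿ(A)/Hⁿ(Δ))^θ μ(2Δ)`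
on every surface ball `Δ = B(x,r) ∩ ∂Ω` with `x ∈ ∂Ω` and
`0 < r < min{diam ∂Ω_{j₀}, (diam ∂Ω)/2}`. -/
theorem weak_Ainfty_from_component_Ainfty
    (n : ℕ) (hn : 1 ≤ n) (C₀ C₁ θ : ℝ) (hC₀ : 1 ≤ C₀) (hC₁ : 1 ≤ C₁) (hθ : 0 < θ) :
    ∃ C₂ : ℝ, 0 < C₂ ∧
      ∀ Ω : Set (Euc n), IsOpen Ω → Bornology.IsBounded Ω → Ω.Nonempty →
        IsADR n (frontier Ω) C₀ →
        (∀ z ∈ Ω, IsADR n (frontier (connectedComponentIn Ω z)) C₀) →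
      ∀ Ωj : Set (Euc n), (∃ z ∈ Ω, Ωj = connectedComponentIn Ω z) →
      ∀ μ : Measure (Euc n), IsFiniteMeasure μ →
        μ (frontier Ω)ᶜ = 0 → μ (frontier Ω \ frontier Ωj) = 0 →
        (∀ z ∈ frontier Ωj, ∀ ρ : ℝ, 0 < ρ → ρ < Metric.diam (frontier Ωj) →
          ∀ A' : Set (Euc n), MeasurableSet A' → A' ⊆ ball z ρ ∩ frontier Ωj →
            μ A' ≤ ENNReal.ofReal C₁ *
              (μH[(n : ℝ)] A' / μH[(n : ℝ)] (ball z ρ ∩ frontier Ωj)) ^ θ *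
              μ (ball z ρ ∩ frontier Ωj)) →
      ∀ x ∈ frontier Ω, ∀ r : ℝ, 0 < r →
        r < min (Metric.diam (frontier Ωj)) (Metric.diam (frontier Ω) / 2) →
        ∀ A : Set (Euc n), MeasurableSet A → A ⊆ ball x r ∩ frontier Ω →
          μ A ≤ ENNReal.ofReal C₂ *
            (μH[(n : ℝ)] A / μH[(n : ℝ)] (ball x r ∩ frontier Ω)) ^ θ *
            μ (ball x (2 * r) ∩ frontier Ω) :=
  weak_Ainfty_from_component_Ainfty_general n C₀ C₁ θ hC₀ hC₁ hθ
end
end
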